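/- arXiv:2208.12732 — 2 statements merged into one kernel-verified Lean document; each statement's English description precedes it below -/
import Mathlib

section
/- Let A be a nonempty finite set, let B_A be either the set of all reflexive binary relations on A or the set of all irreflexive binary relations on A with the bounded distributive lattice structure (∪, ∩) and median μ', let N be a finite set with |N| odd, and let f : B_A^N → B_A be an aggregation rule. Then the following are equivalent: (i) f satisfies Anonymity and Bi-Idempotence and is strategy-proof on D^N for every rich domain D of locally unimodal preorders w.r.t. the median betweenness of (B_A,∪,∩); (ii) f is the majority rule f^maj(R_N) = ⋃_{S ∈ W^maj} (⋂_{i∈S} R_i), which moreover equals the co-majority rule f^∂maj(R_N) = ⋂_{S ∈ W^maj} (⋃_{i∈S} R_i), where W^maj = {S ⊆ N : |S| ≥ ⌊(|N|+2)/2⌋}; (iii) f is the generalized Condorcet-Kemeny rule on B_A for every tie-breaking linear order on B_A, i.e. at each profile it selects the (unique) relation in B_A minimizing the sum of Kemeny distances (sizes of symmetric differences) to the profile's relations. -/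
/-- A preorder (reflexive transitive relation) on `X`, used as an agent's
preference over outcomes. -/
structure Pref (X : Type*) where
  rel : X → X → Prop
  refl : ∀ x, rel x x
  trans : ∀ x y z, rel x y → rel y z → rel x z

namespace Pref

/-- Strict (asymmetric) part of a preference preorder. -/
def strict {X : Type*} (R : Pref X) (x y : X) : Prop := R.rel x y ∧ ¬ R.rel y x

/-- `t` is the unique maximum of the preorder `R`. -/
def IsTop {X : Type*} (R : Pref X) (t : X) : Prop :=
  (∀ y, R.rel t y) ∧ ∀ t', (∀ y, R.rel t' y) → t' = t

end Pref

/-- The interval `I^μ(x,y) = {z : z = μ(x,y,z)}` induced by a ternary median operation. -/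
def medInterval {X : Type*} (μ : X → X → X → X) (x y : X) : Set X :=
  {z | μ x y z = z}

/-- A preorder on `X` is locally unimodal (single-peaked) w.r.t. the betweenness induced
by the median `μ`: it has a unique maximum `t`, and any outcome lying strictly between
`t` and another outcome `y` is not worse than `y`. -/
def LocallyUnimodal {X : Type*} (μ : X → X → X → X) (R : Pref X) : Prop :=
  ∃ t, R.IsTop t ∧ ∀ y z, z ∈ medInterval μ t y → z ≠ t → ¬ R.strict y z

/-- A rich domain of locally unimodal preorders: for all `x,y` it contains a preorder
with top `x` whose upper contour set at `y` is exactly the interval `I^μ(x,y)`. -/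
def RichDomain {X : Type*} (μ : X → X → X → X) (D : Set (Pref X)) : Prop :=
  (∀ R ∈ D, LocallyUnimodal μ R) ∧
  ∀ x y : X, ∃ R ∈ D, R.IsTop x ∧ {z | R.rel z y} = medInterval μ x y

/-- Strategy-proofness of an aggregation rule on profiles drawn from the domain `D`:
no agent `i` whose true preference lies in `D` (with top `tops i`) can strictly gain
by reporting `y` instead of her top. -/
def StrategyProofOn {X N : Type*} [DecidableEq N]
    (f : (N → X) → X) (D : Set (Pref X)) : Prop :=
  ∀ prefs : N → Pref X, (∀ i, prefs i ∈ D) →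
    ∀ tops : N → X, (∀ j, (prefs j).IsTop (tops j)) →
      ∀ (i : N) (y : X),
        ¬ (prefs i).strict (f (Function.update tops i y)) (f tops)

/-- `B_μ`-monotonicity: `f(x_N)` always lies in the median interval between `x_i` and
the outcome obtained when `i` deviates to `y`. -/
def BMuMonotonic {X N : Type*} [DecidableEq N]
    (μ : X → X → X → X) (f : (N → X) → X) : Prop :=
  ∀ (x : N → X) (i : N) (y : X),
    f x ∈ medInterval μ (x i) (f (Function.update x i y))

/-- `m` is meet-irreducible: whenever `m` is the greatest lower bound of a set `Y`,
`m` itself belongs to `Y`. -/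
def MeetIrred {X : Type*} [Preorder X] (m : X) : Prop :=
  ∀ Y : Set X, IsGLB Y m → m ∈ Y

/-- `j` is join-irreducible: whenever `j` is the least upper bound of a set `Y`,
`j` itself belongs to `Y`. -/
def JoinIrred {X : Type*} [Preorder X] (j : X) : Prop :=
  ∀ Y : Set X, IsLUB Y j → j ∈ Y

/-- Monotonic `M_X`-independence of an aggregation rule. -/
def MonotonicMIndependent {X N : Type*} [Preorder X] (f : (N → X) → X) : Prop :=
  ∀ (x y : N → X) (m : X), MeetIrred m →
    {i | x i ≤ m} ⊆ {i | y i ≤ m} → f x ≤ m → f y ≤ m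

/-- Upper distributivity: every principal order filter `↑u` is a distributive lattice,
expressed by the identity `x ⊔ (y ⊓ z) = (x ⊔ y) ⊓ (x ⊔ z)` for elements above a
common lower bound `u` (meets expressed via `IsGLB`). -/
def UpperDistributive (X : Type*) [SemilatticeSup X] : Prop :=
  ∀ u x y z m₁ m₂ : X, u ≤ x → u ≤ y → u ≤ z →
    IsGLB {y, z} m₁ → IsGLB {x ⊔ y, x ⊔ z} m₂ → x ⊔ m₁ = m₂

/-- Co-coronation (meet-Helly): if the three pairwise meets of `x,y,z` exist then the
meet of `{x,y,z}` exists. -/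
def MeetHelly (X : Type*) [SemilatticeSup X] : Prop :=
  ∀ x y z : X, (∃ a, IsGLB {x, y} a) → (∃ b, IsGLB {y, z} b) →
    (∃ c, IsGLB {x, z} c) → ∃ d, IsGLB ({x, y, z} : Set X) d

/-- `μ` is the median operation: `μ(x,y,z)` is the meet of `x⊔y`, `y⊔z`, `x⊔z`. -/
def IsMedianFn {X : Type*} [SemilatticeSup X] (μ : X → X → X → X) : Prop :=
  ∀ x y z : X, IsGLB {x ⊔ y, y ⊔ z, x ⊔ z} (μ x y z)

/-- Anonymity: invariance of the rule under permutations of the agents. -/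
def Anonymous {X N : Type*} (f : (N → X) → X) : Prop :=
  ∀ (x : N → X) (σ : Equiv.Perm N), f (x ∘ σ) = f x

/-- Bi-idempotence: if every agent proposes one of the two outcomes `y, z`, the rule
selects one of `y, z`. -/
def BiIdempotent {X N : Type*} (f : (N → X) → X) : Prop :=
  ∀ (x : N → X) (y z : X), (∀ i, x i = y ∨ x i = z) → f x = y ∨ f x = z

/-- The co-majority rule: `f(x_N)` is the meet over all majority coalitions `S`
(of size at least `⌊(|N|+2)/2⌋`) of the joins `⋁_{i ∈ S} x_i`. -/
def IsCoMajority {X N : Type*} [SemilatticeSup X] [Fintype N] (f : (N → X) → X) : Prop :=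
  ∀ x : N → X,
    IsGLB {z | ∃ S : Finset N, (Fintype.card N + 2) / 2 ≤ S.card ∧ IsLUB (x '' ↑S) z} (f x)

/-- An order filter of the poset of coalitions `(P(N), ⊆)`. -/
def OrderFilterN {N : Type*} (F : Set (Set N)) : Prop :=
  ∀ S T : Set N, S ∈ F → S ⊆ T → T ∈ F

/-- The locally `m`-winning coalitions of the rule `f`. -/
def winningCoalitions {X N : Type*} [Preorder X] (f : (N → X) → X) (m : X) : Set (Set N) :=
  {T | ∃ x : N → X, {i | x i ≤ m} = T ∧ f x ≤ m}

/-- Shortest-path distance in the covering graph of a partial order. -/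
noncomputable def covDist {X : Type*} [PartialOrder X] (x y : X) : ℕ :=
  sInf {n | ∃ p : ℕ → X, p 0 = x ∧ p n = y ∧ ∀ k < n, p k ⋖ p (k + 1) ∨ p (k + 1) ⋖ p k}

/-- The collection `B_A` of binary relations on `A` satisfying the predicate `P`
(e.g. all reflexive relations, or all irreflexive relations). -/
def RelSub (A : Type*) (P : (A → A → Prop) → Prop) : Type _ :=
  {R : A → A → Prop // P R}

/-- The predicate `P` is closed under pointwise union and intersection of relations
(as are reflexivity and irreflexivity). -/
class RelClosed (A : Type*) (P : (A → A → Prop) → Prop) : Prop where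
  or_closed : ∀ R S : A → A → Prop, P R → P S → P (fun a b => R a b ∨ S a b)
  and_closed : ∀ R S : A → A → Prop, P R → P S → P (fun a b => R a b ∧ S a b)

instance (A : Type*) : RelClosed A (@Reflexive A) where
  or_closed _ _ hR _ := fun a => Or.inl (hR a)
  and_closed _ _ hR hS := fun a => ⟨hR a, hS a⟩

instance (A : Type*) : RelClosed A (@Irreflexive A) where
  or_closed _ _ hR hS := fun a h => h.elim (hR a) (hS a)
  and_closed _ _ hR _ := fun a h => hR a h.1

namespace RelSub

variable {A : Type*} {P : (A → A → Prop) → Prop}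

/-- Relations in `B_A` are ordered by set inclusion. -/
instance : PartialOrder (RelSub A P) where
  le R S := ∀ a b, R.1 a b → S.1 a b
  le_refl R := fun _ _ h => h
  le_trans R S T h₁ h₂ := fun a b h => h₂ a b (h₁ a b h)
  le_antisymm R S h₁ h₂ :=
    Subtype.ext (funext fun a => funext fun b => propext ⟨h₁ a b, h₂ a b⟩)

/-- The lattice median `μ'(R₁,R₂,R₃) = (R₁∪R₂) ∩ (R₂∪R₃) ∩ (R₃∪R₁)`. -/
def median [RelClosed A P] (R₁ R₂ R₃ : RelSub A P) : RelSub A P :=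
  ⟨fun a b => (R₁.1 a b ∨ R₂.1 a b) ∧ (R₂.1 a b ∨ R₃.1 a b) ∧ (R₃.1 a b ∨ R₁.1 a b),
    RelClosed.and_closed _ _ (RelClosed.or_closed _ _ R₁.2 R₂.2)
      (RelClosed.and_closed _ _ (RelClosed.or_closed _ _ R₂.2 R₃.2)
        (RelClosed.or_closed _ _ R₃.2 R₁.2))⟩

end RelSub

/-- Monotonic `J_X`-independence (the dual of monotonic `M_X`-independence). -/
def MonotonicJIndependent {X N : Type*} [Preorder X] (f : (N → X) → X) : Prop :=
  ∀ (x y : N → X) (j : X), JoinIrred j →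
    {i | j ≤ x i} ⊆ {i | j ≤ y i} → j ≤ f x → j ≤ f y

/-- Monotonic independence of irrelevant alternatives for relation-valued rules. -/
def MonotonicIIA {A N : Type*} {P : (A → A → Prop) → Prop}
    (f : (N → RelSub A P) → RelSub A P) : Prop :=
  ∀ (R R' : N → RelSub A P) (u v : A),
    {i | (R i).1 u v} ⊆ {i | (R' i).1 u v} → (f R).1 u v → (f R').1 u v

/-- The Kemeny distance between two relations: the number of ordered pairs in their
symmetric difference. -/
noncomputable def kemenyDist {A : Type*} {P : (A → A → Prop) → Prop}
    (R S : RelSub A P) : ℕ :=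
  Set.ncard {p : A × A |
    (R.1 p.1 p.2 ∧ ¬ S.1 p.1 p.2) ∨ (S.1 p.1 p.2 ∧ ¬ R.1 p.1 p.2)}

/-!
Strategy-proofness on every rich domain is equivalent to `B_μ`-monotonicity, three-tier
preferences being the binding test. For relations this amounts, pair by pair, to monotone
independence: whether `(a, b)` belongs to the outcome depends monotonically on the coalition of
agents relating `a` to `b`. For `a ≠ b`, anonymity makes this family of coalitions depend only on
their sizes, and bi-idempotence, applied to profiles whose relations agree off
`{(a, b), (b, a)}`, makes it self-dual; for `|N|` odd the only such monotone family is that of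
the majorities. The Kemeny score is a sum over pairs of the number of agents disagreeing with the
candidate on the pair, and siding with the majority minimizes each summand, strictly for `|N|`
odd.
-/

open Finset

namespace RelSub

variable {A : Type*} {P : (A → A → Prop) → Prop} [RelClosed A P]

lemma mem_medInterval_iff {x y z : RelSub A P} :
    z ∈ medInterval median x y ↔ ∀ a b, (z.1 a b ↔ x.1 a b) ∨ (z.1 a b ↔ y.1 a b) := by
  refine (Subtype.ext_iff (p := P)).trans ?_
  simp only [median, funext_iff, eq_iff_iff]
  exact forall₂_congr fun a b => by tauto

lemma left_mem_medInterval (x y : RelSub A P) : x ∈ medInterval median x y :=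
  mem_medInterval_iff.2 fun _ _ => Or.inl Iff.rfl

lemma right_mem_medInterval (x y : RelSub A P) : y ∈ medInterval median x y :=
  mem_medInterval_iff.2 fun _ _ => Or.inr Iff.rfl

lemma eq_of_mem_medInterval_self {x z : RelSub A P} (h : z ∈ medInterval median x x) :
    z = x :=
  Subtype.ext <| funext₂ fun a b => propext <| (mem_medInterval_iff.1 h a b).elim id id

lemma medInterval_subset_of_mem {x y y' : RelSub A P} (h : y' ∈ medInterval median x y) :
    medInterval median x y' ⊆ medInterval median x y := by
  intro z hz
  rw [mem_medInterval_iff] at *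
  intro a b
  have := h a b
  have := hz a b
  tauto

end RelSub

open RelSub

section TierPreference

variable {A : Type*} {P : (A → A → Prop) → Prop} [RelClosed A P]

/-- The three-tier preference with top `x`, middle tier `I(x, y) \ {x}`, and everything
else at the bottom. -/
def tierPref (x y : RelSub A P) : Pref (RelSub A P) where
  rel z w := (w = x → z = x) ∧ (w ∈ medInterval median x y → z ∈ medInterval median x y)
  refl _ := ⟨id, id⟩
  trans _ _ _ h₁ h₂ := ⟨h₁.1 ∘ h₂.1, h₁.2 ∘ h₂.2⟩

lemma tierPref_isTop (x y : RelSub A P) : (tierPref x y).IsTop x :=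
  ⟨fun _ => ⟨fun _ => rfl, fun _ => left_mem_medInterval x y⟩,
    fun _ ht => (ht x).1 rfl⟩

lemma tierPref_upperContour (x y : RelSub A P) :
    {z | (tierPref x y).rel z y} = medInterval median x y := by
  ext z
  refine ⟨fun hz => hz.2 (right_mem_medInterval x y), fun hz => ⟨?_, fun _ => hz⟩⟩
  rintro rfl
  exact eq_of_mem_medInterval_self hz

lemma tierPref_locallyUnimodal (x y : RelSub A P) :
    LocallyUnimodal median (tierPref x y) := by
  refine ⟨x, tierPref_isTop x y, fun y' z hz hzx ⟨_, hworse⟩ => hworse ⟨?_, ?_⟩⟩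
  · rintro rfl
    exact absurd (eq_of_mem_medInterval_self hz) hzx
  · exact fun hy' => medInterval_subset_of_mem hy' hz

variable (A P) in
def tierDomain : Set (Pref (RelSub A P)) :=
  Set.range fun p : RelSub A P × RelSub A P => tierPref p.1 p.2

lemma richDomain_tierDomain : RichDomain median (tierDomain A P) := by
  refine ⟨?_, fun x y => ⟨tierPref x y, ⟨(x, y), rfl⟩, tierPref_isTop x y,
    tierPref_upperContour x y⟩⟩
  rintro _ ⟨⟨x, y⟩, rfl⟩
  exact tierPref_locallyUnimodal x y

end TierPreference

theorem BMuMonotonic.strategyProofOn {X N : Type*} [DecidableEq N] {μ : X → X → X → X}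
    {f : (N → X) → X} (hf : BMuMonotonic μ f) {D : Set (Pref X)}
    (hD : ∀ R ∈ D, LocallyUnimodal μ R) : StrategyProofOn f D := by
  intro prefs hprefs tops htops i y hgain
  obtain ⟨t, htop, hunimodal⟩ := hD _ (hprefs i)
  obtain rfl : tops i = t := htop.2 _ (htops i).1
  by_cases hfx : f tops = tops i
  · exact hgain.2 (hfx ▸ htop.1 _)
  · exact hunimodal _ _ (hf tops i y) hfx hgain

section StrategyProofness

variable {A : Type*} {P : (A → A → Prop) → Prop} [RelClosed A P]
  {N : Type*} [DecidableEq N] {f : (N → RelSub A P) → RelSub A P}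

/-- Agent `i` with the tier preference of top `x i` and middle tier `I(x i, q)`, `q` the
outcome after her deviation, strictly prefers `q` to any outcome outside `I(x i, q)`. -/
lemma bMuMonotonic_of_strategyProofOn_tierDomain (hf : StrategyProofOn f (tierDomain A P)) :
    BMuMonotonic median f := by
  intro x i y
  by_contra hout
  refine hf (fun j => tierPref (x j) (f (Function.update x i y))) (fun j => ⟨(_, _), rfl⟩) x
    (fun j => tierPref_isTop _ _) i y ⟨⟨fun hx => ?_, fun hin => absurd hin hout⟩,
      fun h => hout (h.2 (right_mem_medInterval _ _))⟩
  exact absurd (hx ▸ left_mem_medInterval _ _) hout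

theorem forall_strategyProofOn_iff_bMuMonotonic :
    (∀ D, RichDomain median D → StrategyProofOn f D) ↔ BMuMonotonic median f :=
  ⟨fun h => bMuMonotonic_of_strategyProofOn_tierDomain (h _ richDomain_tierDomain),
    fun h _ hD => h.strategyProofOn hD.1⟩

end StrategyProofness

section Independence

variable {A : Type*} {P : (A → A → Prop) → Prop} {N : Type*}
  {f : (N → RelSub A P) → RelSub A P}

lemma MonotonicIIA.congr (hf : MonotonicIIA f) {x y : N → RelSub A P} {a b : A}
    (h : ∀ i, (x i).1 a b ↔ (y i).1 a b) : (f x).1 a b ↔ (f y).1 a b :=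
  ⟨hf x y a b fun i => (h i).1, hf y x a b fun i => (h i).2⟩

lemma MonotonicIIA.apply_update_of_imp [DecidableEq N] (hf : MonotonicIIA f)
    (x : N → RelSub A P) (i : N) {Q : RelSub A P} {a b : A} (hQ : (x i).1 a b → Q.1 a b)
    (hfx : (f x).1 a b) :
    (f (Function.update x i Q)).1 a b := by
  refine hf _ _ a b (fun j hj => ?_) hfx
  rcases eq_or_ne j i with rfl | hji
  · simpa using hQ hj
  · simpa [Function.update_of_ne hji] using hj

/-- In the profile built from `S`, exactly `S` relates `a` to `b` and exactly `Sᶜ` relates `b`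
to `a`. Bi-idempotence is applied to it and to the profile in which exactly `S` relates both. -/
lemma apply_compl_iff_not_apply [Fintype N] [DecidableEq N] (hB : BiIdempotent f)
    (hI : MonotonicIIA f) {a b : A} (pair : Prop → Prop → RelSub A P)
    (hpair : ∀ s t, ((pair s t).1 a b ↔ s) ∧ ((pair s t).1 b a ↔ t)) (S : Finset N) :
    (f fun i => pair (i ∈ Sᶜ) (i ∉ Sᶜ)).1 a b ↔ ¬ (f fun i => pair (i ∈ S) (i ∉ S)).1 a b := by
  have hE : ∀ S : Finset N,
      (f fun i => pair (i ∈ S) (i ∉ S)).1 a b ↔ ¬ (f fun i => pair (i ∈ S) (i ∉ S)).1 b a := by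
    intro S
    rcases hB (fun i => pair (i ∈ S) (i ∉ S)) (pair True False) (pair False True)
      (fun i => by by_cases hi : i ∈ S <;> simp [hi]) with h | h <;> simp [h, hpair]
  have hF : ∀ S : Finset N,
      (f fun i => pair (i ∈ S) (i ∈ S)).1 a b ↔ (f fun i => pair (i ∈ S) (i ∈ S)).1 b a := by
    intro S
    rcases hB (fun i => pair (i ∈ S) (i ∈ S)) (pair True True) (pair False False)
      (fun i => by by_cases hi : i ∈ S <;> simp [hi]) with h | h <;> simp [h, hpair]
  calc _ ↔ (f fun i => pair (i ∈ Sᶜ) (i ∈ Sᶜ)).1 a b := hI.congr fun i => by simp [hpair]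
    _ ↔ (f fun i => pair (i ∈ Sᶜ) (i ∈ Sᶜ)).1 b a := hF Sᶜ
    _ ↔ (f fun i => pair (i ∈ S) (i ∉ S)).1 b a := hI.congr fun i => by simp [hpair]
    _ ↔ _ := by rw [hE]; tauto

variable [RelClosed A P] [DecidableEq N]

lemma BMuMonotonic.apply_update_of_imp (hf : BMuMonotonic median f) (x : N → RelSub A P)
    (i : N) {Q : RelSub A P} {a b : A} (hQ : (x i).1 a b → Q.1 a b) (hfx : (f x).1 a b) :
    (f (Function.update x i Q)).1 a b := by
  have h₁ := mem_medInterval_iff.1 (hf x i Q) a b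
  have h₂ := mem_medInterval_iff.1 (hf (Function.update x i Q) i (x i)) a b
  rw [Function.update_idem, Function.update_eq_self, Function.update_self] at h₂
  tauto

theorem BMuMonotonic.monotonicIIA [Fintype N] (hf : BMuMonotonic median f) :
    MonotonicIIA f := by
  intro x y a b hsub hfx
  have hmixed : ∀ s : Finset N, (f (s.piecewise y x)).1 a b := by
    intro s
    induction s using Finset.induction_on with
    | empty => simpa using hfx
    | insert j s hj ih =>
      rw [Finset.piecewise_insert]
      refine hf.apply_update_of_imp _ j (fun h => hsub ?_) ih
      rwa [Finset.piecewise_eq_of_notMem _ _ _ hj] at h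
  simpa using hmixed univ

theorem MonotonicIIA.bMuMonotonic (hf : MonotonicIIA f) : BMuMonotonic median f := by
  intro x i y
  refine mem_medInterval_iff.2 fun a b => ?_
  have h₁ := hf.apply_update_of_imp x i (Q := y) (a := a) (b := b)
  have h₂ := hf.apply_update_of_imp (Function.update x i y) i (Q := x i) (a := a) (b := b)
  rw [Function.update_idem, Function.update_eq_self, Function.update_self] at h₂
  tauto

theorem bMuMonotonic_iff_monotonicIIA [Fintype N] :
    BMuMonotonic median f ↔ MonotonicIIA f :=
  ⟨BMuMonotonic.monotonicIIA, MonotonicIIA.bMuMonotonic⟩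

end Independence

section Majority

open Classical

variable {N : Type*} [Fintype N]

def Majority (V : N → Prop) : Prop :=
  (Fintype.card N + 2) / 2 ≤ #{i | V i}

lemma majority_iff_exists {V : N → Prop} :
    Majority V ↔ ∃ S : Finset N, (Fintype.card N + 2) / 2 ≤ #S ∧ ∀ i ∈ S, V i :=
  ⟨fun h => ⟨_, h, fun _ hi => (mem_filter.1 hi).2⟩, fun ⟨_, hS, hV⟩ =>
    hS.trans (card_le_card fun i hi => mem_filter.2 ⟨mem_univ i, hV i hi⟩)⟩

lemma Majority.mono {V W : N → Prop} (h : ∀ i, V i → W i) (hV : Majority V) : Majority W :=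
  let ⟨S, hS, hSV⟩ := majority_iff_exists.1 hV
  majority_iff_exists.2 ⟨S, hS, fun i hi => h i (hSV i hi)⟩

lemma majority_comp_perm (V : N → Prop) (σ : Equiv.Perm N) :
    Majority (V ∘ σ) ↔ Majority V := by
  unfold Majority
  rw [card_equiv σ (s := {i | (V ∘ σ) i}) (t := {i | V i}) fun i => by simp]

lemma not_majority_of_forall_not {V : N → Prop} (h : ∀ i, ¬ V i) : ¬ Majority V := by
  simp [Majority, h]

variable (hodd : Odd (Fintype.card N))
include hodd

lemma quota_le_card_compl_iff (S : Finset N) :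
    (Fintype.card N + 2) / 2 ≤ #Sᶜ ↔ ¬ (Fintype.card N + 2) / 2 ≤ #S := by
  obtain ⟨k, hk⟩ := hodd
  have := card_le_univ S
  rw [card_compl]
  omega

lemma majority_not_iff (V : N → Prop) : Majority (fun i => ¬ V i) ↔ ¬ Majority V := by
  unfold Majority
  rw [← quota_le_card_compl_iff hodd, compl_filter]
  convert Iff.rfl

lemma majority_iff_forall {V : N → Prop} :
    Majority V ↔ ∀ S : Finset N, (Fintype.card N + 2) / 2 ≤ #S → ∃ i ∈ S, V i := by
  rw [← not_not (a := Majority V), ← majority_not_iff hodd, majority_iff_exists]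
  simp only [not_exists, not_and, not_forall, not_not, exists_prop]

lemma majority_iff_of_forall_iff {V : N → Prop} {s : Prop} (h : ∀ i, V i ↔ s) :
    Majority V ↔ s := by
  by_cases hs : s
  · refine iff_of_true ?_ hs
    by_contra hV
    exact not_majority_of_forall_not (fun i hi => hi ((h i).2 hs))
      ((majority_not_iff hodd V).2 hV)
  · exact iff_of_false (not_majority_of_forall_not fun i => (h i).not.2 hs) hs

lemma card_xor_majority_lt (V : N → Prop) {s : Prop} (hs : ¬ (s ↔ Majority V)) :
    #{i | Xor (Majority V) (V i)} < #{i | Xor s (V i)} := by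
  have hcard : ∀ t : Prop, #{i | Xor t (V i)} = if t then #{i | ¬ V i} else #{i | V i} := by
    intro t
    by_cases ht : t <;> simp [ht]
  have hsplit := card_filter_add_card_filter_not (s := univ) fun i => V i
  obtain ⟨k, hk⟩ := hodd
  rw [card_univ] at hsplit
  unfold Majority at hs ⊢
  rw [hcard, hcard]
  by_cases hm : (Fintype.card N + 2) / 2 ≤ #{i | V i}
  · have hs' : ¬ s := fun h => hs (iff_of_true h hm)
    rw [if_pos hm, if_neg hs']
    omega
  · have hs' : s := by_contra fun h => hs (iff_of_false h hm)
    rw [if_neg hm, if_pos hs']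
    omega

lemma card_xor_majority_le (V : N → Prop) (s : Prop) :
    #{i | Xor (Majority V) (V i)} ≤ #{i | Xor s (V i)} := by
  by_cases hs : s ↔ Majority V
  · rw [propext hs]
  · exact (card_xor_majority_lt hodd V hs).le

theorem iff_quota_le_card_of_monotone_of_selfDual {W : Finset N → Prop} (hmono : Monotone W)
    (hcard : ∀ S T : Finset N, #S = #T → W S → W T) (hdual : ∀ S, W Sᶜ ↔ ¬ W S)
    (S : Finset N) : W S ↔ (Fintype.card N + 2) / 2 ≤ #S := by
  have hquota : (Fintype.card N + 2) / 2 ≤ Fintype.card N := by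
    obtain ⟨k, hk⟩ := hodd
    omega
  have hminimal : ∀ S : Finset N, #S = (Fintype.card N + 2) / 2 → W S := by
    intro S hS
    by_contra hWS
    have hSc : #Sᶜ ≤ (Fintype.card N + 2) / 2 := by
      obtain ⟨k, hk⟩ := hodd
      rw [card_compl]
      omega
    obtain ⟨T, hST, -, hT⟩ :=
      exists_subsuperset_card_eq (subset_univ Sᶜ) hSc (by rwa [card_univ])
    exact hWS (hcard T S (hT.trans hS.symm) (hmono hST ((hdual S).2 hWS)))
  refine ⟨fun hWS => ?_, fun hS => ?_⟩
  · by_contra hS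
    obtain ⟨T, hTS, hT⟩ := exists_subset_card_eq ((quota_le_card_compl_iff hodd S).2 hS)
    exact (hdual S).1 (hmono hTS (hminimal T hT)) hWS
  · obtain ⟨T, hTS, hT⟩ := exists_subset_card_eq hS
    exact hmono hTS (hminimal T hT)

end Majority

section MajorityRule

open Classical

variable {A : Type*} {P : (A → A → Prop) → Prop} {N : Type*} [Fintype N]

/-- The majority rule `R_N ↦ ⋃_{S ∈ W^maj} ⋂_{i ∈ S} R_i`, stated pairwise. -/
def IsMajorityRule (f : (N → RelSub A P) → RelSub A P) : Prop :=
  ∀ R a b, (f R).1 a b ↔ Majority fun i => (R i).1 a b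

variable {f : (N → RelSub A P) → RelSub A P}

lemma IsMajorityRule.anonymous (hf : IsMajorityRule f) : Anonymous f := fun x σ =>
  Subtype.ext <| funext₂ fun a b => propext <| by
    rw [hf, hf]
    exact majority_comp_perm (fun i => (x i).1 a b) σ

lemma IsMajorityRule.monotonicIIA (hf : IsMajorityRule f) : MonotonicIIA f :=
  fun _ _ a b hsub h => (hf _ a b).2 <| ((hf _ a b).1 h).mono fun _ hi => hsub hi

variable (hodd : Odd (Fintype.card N))
include hodd

lemma IsMajorityRule.eq_of_majority (hf : IsMajorityRule f) {x : N → RelSub A P}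
    {y : RelSub A P} (hy : Majority fun i => x i = y) : f x = y := by
  refine Subtype.ext <| funext₂ fun a b => propext ?_
  rw [hf]
  by_cases hyab : y.1 a b
  · exact iff_of_true (hy.mono fun i (hi : x i = y) => hi ▸ hyab) hyab
  · refine iff_of_false (fun hx => ?_) hyab
    refine (majority_not_iff hodd _).1 (hx.mono fun i hi (hxy : x i = y) => ?_) hy
    exact hyab (hxy ▸ hi)

lemma IsMajorityRule.biIdempotent (hf : IsMajorityRule f) : BiIdempotent f := by
  intro x y z hyz
  by_cases hy : Majority fun i => x i = y
  · exact Or.inl (hf.eq_of_majority hodd hy)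
  · refine Or.inr (hf.eq_of_majority hodd ?_)
    exact ((majority_not_iff hodd _).2 hy).mono fun i hi => (hyz i).resolve_left hi

end MajorityRule

lemma exists_perm_mem_iff_mem {N : Type*} [DecidableEq N] [Fintype N] {S T : Finset N}
    (h : #S = #T) : ∃ σ : Equiv.Perm N, ∀ i, σ i ∈ T ↔ i ∈ S := by
  let e : {i // i ∈ S} ≃ {i // i ∈ T} := Fintype.equivOfCardEq (by simpa using h)
  exact ⟨e.extendSubtype, fun i =>
    ⟨fun hi => by_contra fun hS => e.extendSubtype_not_mem i hS hi, e.extendSubtype_mem i⟩⟩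

section ReflexiveOrIrreflexive

open Classical

variable {A : Type*} {P : (A → A → Prop) → Prop} (hP : P = @Reflexive A ∨ P = @Irreflexive A)
include hP

lemma RelSub.apply_self_iff (R S : RelSub A P) (a : A) : R.1 a a ↔ S.1 a a := by
  rcases hP with rfl | rfl
  · exact iff_of_true (R.2 a) (S.2 a)
  · exact iff_of_false (R.2 a) (S.2 a)

lemma RelSub.exists_apply_iff_and_apply_swap_iff {a b : A} (hab : a ≠ b) (s t : Prop) :
    ∃ Q : RelSub A P, (Q.1 a b ↔ s) ∧ (Q.1 b a ↔ t) := by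
  rcases hP with rfl | rfl
  · exact ⟨⟨fun u v => u = v ∨ (u = a ∧ v = b ∧ s) ∨ (u = b ∧ v = a ∧ t),
      fun _ => Or.inl rfl⟩, by simp [hab, hab.symm]⟩
  · refine ⟨⟨fun u v => (u = a ∧ v = b ∧ s) ∨ (u = b ∧ v = a ∧ t), fun u h => ?_⟩,
      by simp [hab, hab.symm]⟩
    rcases h with ⟨rfl, rfl, -⟩ | ⟨rfl, rfl, -⟩ <;> exact hab rfl

variable {N : Type*} [Fintype N] (hodd : Odd (Fintype.card N))
include hodd

lemma RelSub.exists_majority (R : N → RelSub A P) :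
    ∃ M : RelSub A P, ∀ a b, M.1 a b ↔ Majority fun i => (R i).1 a b := by
  rcases hP with rfl | rfl
  · refine ⟨⟨fun a b => Majority fun i => (R i).1 a b, fun a => ?_⟩, fun _ _ => Iff.rfl⟩
    exact (majority_iff_of_forall_iff hodd fun i => iff_true_intro ((R i).2 a)).2 trivial
  · refine ⟨⟨fun a b => Majority fun i => (R i).1 a b, fun a => ?_⟩, fun _ _ => Iff.rfl⟩
    exact (majority_iff_of_forall_iff hodd fun i => iff_false_intro ((R i).2 a)).1

variable {f : (N → RelSub A P) → RelSub A P}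

theorem isMajorityRule_of_anonymous_of_biIdempotent_of_monotonicIIA (hA : Anonymous f)
    (hB : BiIdempotent f) (hI : MonotonicIIA f) : IsMajorityRule f := by
  intro x a b
  rcases eq_or_ne a b with rfl | hab
  · exact (majority_iff_of_forall_iff hodd fun i => RelSub.apply_self_iff hP (x i) (f x) a).symm
  choose pair hpair using RelSub.exists_apply_iff_and_apply_swap_iff hP hab
  let E : Finset N → N → RelSub A P := fun S i => pair (i ∈ S) (i ∉ S)
  have hdual : ∀ S, (f (E Sᶜ)).1 a b ↔ ¬ (f (E S)).1 a b :=
    apply_compl_iff_not_apply hB hI pair hpair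
  have hmono : Monotone fun S => (f (E S)).1 a b :=
    fun S T hST => hI _ _ a b fun i hi => by
      simp only [Set.mem_setOf_eq, E, hpair] at hi ⊢
      exact hST hi
  have hcard : ∀ S T : Finset N, #S = #T → (f (E S)).1 a b → (f (E T)).1 a b := by
    intro S T hST
    obtain ⟨σ, hσ⟩ := exists_perm_mem_iff_mem hST
    have hES : E T ∘ σ = E S := funext fun i => by simp [E, hσ]
    rw [← hES, hA]
    exact id
  have hx : (f x).1 a b ↔ (f (E {i | (x i).1 a b})).1 a b := hI.congr fun i => by simp [E, hpair]
  rw [hx, iff_quota_le_card_of_monotone_of_selfDual hodd hmono hcard hdual]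
  rfl

theorem isMajorityRule_iff [RelClosed A P] [DecidableEq N] :
    (Anonymous f ∧ BiIdempotent f ∧ ∀ D, RichDomain median D → StrategyProofOn f D) ↔
      IsMajorityRule f := by
  rw [forall_strategyProofOn_iff_bMuMonotonic, bMuMonotonic_iff_monotonicIIA]
  exact ⟨fun ⟨hA, hB, hI⟩ =>
      isMajorityRule_of_anonymous_of_biIdempotent_of_monotonicIIA hP hodd hA hB hI,
    fun hf => ⟨hf.anonymous, hf.biIdempotent hodd, hf.monotonicIIA⟩⟩

end ReflexiveOrIrreflexive

section Kemeny

open Classical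

variable {A : Type*} [Fintype A] {P : (A → A → Prop) → Prop} {N : Type*} [Fintype N]

lemma sum_kemenyDist_eq_sum_card_xor (R' : RelSub A P) (R : N → RelSub A P) :
    ∑ i, kemenyDist R' (R i) = ∑ p : A × A, #{i | Xor (R'.1 p.1 p.2) ((R i).1 p.1 p.2)} := by
  have hdist : ∀ S : RelSub A P,
      kemenyDist R' S = #{p : A × A | Xor (R'.1 p.1 p.2) (S.1 p.1 p.2)} := by
    intro S
    rw [kemenyDist, Set.ncard_eq_toFinset_card', Set.toFinset_setOf]
    rfl
  simp only [hdist]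
  exact sum_card_bipartiteAbove_eq_sum_card_bipartiteBelow _

variable (hodd : Odd (Fintype.card N)) {R : N → RelSub A P} {M : RelSub A P}
  (hM : ∀ a b, M.1 a b ↔ Majority fun i => (R i).1 a b)
include hodd hM

theorem sum_kemenyDist_majority_le (R' : RelSub A P) :
    ∑ i, kemenyDist M (R i) ≤ ∑ i, kemenyDist R' (R i) := by
  rw [sum_kemenyDist_eq_sum_card_xor, sum_kemenyDist_eq_sum_card_xor]
  refine sum_le_sum fun p _ => ?_
  simp only [hM]
  exact card_xor_majority_le hodd _ _

theorem eq_of_sum_kemenyDist_le {R' : RelSub A P}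
    (h : ∑ i, kemenyDist R' (R i) ≤ ∑ i, kemenyDist M (R i)) : R' = M := by
  by_contra hne
  obtain ⟨p, hp⟩ : ∃ p : A × A, ¬ (R'.1 p.1 p.2 ↔ M.1 p.1 p.2) := by
    by_contra! hall
    exact hne (Subtype.ext (funext₂ fun a b => propext (hall (a, b))))
  refine h.not_gt ?_
  rw [sum_kemenyDist_eq_sum_card_xor, sum_kemenyDist_eq_sum_card_xor]
  refine sum_lt_sum (fun p _ => ?_) ⟨p, mem_univ p, ?_⟩ <;> simp only [hM]
  · exact card_xor_majority_le hodd _ _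
  · exact card_xor_majority_lt hodd _ (by rwa [hM] at hp)

end Kemeny

theorem relRules_majority_iff_condorcetKemeny_general
    (A : Type*) [Fintype A]
    (P : (A → A → Prop) → Prop) [RelClosed A P]
    (hP : P = @Reflexive A ∨ P = @Irreflexive A)
    {N : Type*} [Fintype N] [DecidableEq N]
    (hodd : Odd (Fintype.card N))
    (f : (N → RelSub A P) → RelSub A P) :
    ((Anonymous f ∧ BiIdempotent f ∧
        ∀ D : Set (Pref (RelSub A P)),
          RichDomain (RelSub.median (P := P)) D → StrategyProofOn f D) ↔
      ((∀ (R : N → RelSub A P) (a b : A),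
          (f R).1 a b ↔ ∃ S : Finset N,
            (Fintype.card N + 2) / 2 ≤ S.card ∧ ∀ i ∈ S, (R i).1 a b) ∧
       (∀ (R : N → RelSub A P) (a b : A),
          (f R).1 a b ↔ ∀ S : Finset N,
            (Fintype.card N + 2) / 2 ≤ S.card → ∃ i ∈ S, (R i).1 a b))) ∧
    ((∀ (R : N → RelSub A P) (a b : A),
        (f R).1 a b ↔ ∃ S : Finset N,
          (Fintype.card N + 2) / 2 ≤ S.card ∧ ∀ i ∈ S, (R i).1 a b) →
      ∀ R : N → RelSub A P,
        (∀ R' : RelSub A P,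
          ∑ i, kemenyDist (f R) (R i) ≤ ∑ i, kemenyDist R' (R i)) ∧
        (∀ R' : RelSub A P,
          (∀ R'' : RelSub A P,
            ∑ i, kemenyDist R' (R i) ≤ ∑ i, kemenyDist R'' (R i)) → R' = f R)) ∧
    ((∀ R : N → RelSub A P,
        (∀ R' : RelSub A P,
          ∑ i, kemenyDist (f R) (R i) ≤ ∑ i, kemenyDist R' (R i)) ∧
        (∀ R' : RelSub A P,
          (∀ R'' : RelSub A P,
            ∑ i, kemenyDist R' (R i) ≤ ∑ i, kemenyDist R'' (R i)) → R' = f R)) →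
      (Anonymous f ∧ BiIdempotent f ∧
        ∀ D : Set (Pref (RelSub A P)),
          RichDomain (RelSub.median (P := P)) D → StrategyProofOn f D)) := by
  refine ⟨(isMajorityRule_iff hP hodd).trans ⟨fun hf => ?_, fun h R a b => ?_⟩,
    fun h R => ?_, fun h => (isMajorityRule_iff hP hodd).2 fun R a b => ?_⟩
  · exact ⟨fun R a b => (hf R a b).trans majority_iff_exists,
      fun R a b => (hf R a b).trans (majority_iff_forall hodd)⟩
  · exact (h.1 R a b).trans majority_iff_exists.symm
  · have hM a b := (h R a b).trans majority_iff_exists.symm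
    exact ⟨sum_kemenyDist_majority_le hodd hM,
      fun R' hR' => eq_of_sum_kemenyDist_le hodd hM (hR' (f R))⟩
  · obtain ⟨M, hM⟩ := RelSub.exists_majority hP hodd R
    rw [← (h R).2 M (sum_kemenyDist_majority_le hodd hM)]
    exact hM a b

/-- **Proposition 5.** For `B_A` the reflexive — or irreflexive — binary relations on a
nonempty finite set `A` and an odd number of agents, an aggregation rule satisfies
Anonymity, Bi-Idempotence and strategy-proofness on every rich locally unimodal domain
iff it is the majority rule `f(R_N) = ⋃_{S∈W^maj}(⋂_{i∈S}R_i)` (which then equals the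
co-majority rule `⋂_{S∈W^maj}(⋃_{i∈S}R_i)`), iff it is the generalized
Condorcet-Kemeny rule: at each profile it selects the unique relation in `B_A`
minimizing the sum of Kemeny distances to the profile. -/
theorem relRules_majority_iff_condorcetKemeny
    (A : Type*) [Fintype A] [Nonempty A]
    (P : (A → A → Prop) → Prop) [RelClosed A P]
    (hP : P = @Reflexive A ∨ P = @Irreflexive A)
    {N : Type*} [Fintype N] [DecidableEq N]
    (hodd : Odd (Fintype.card N))
    (f : (N → RelSub A P) → RelSub A P) :
    ((Anonymous f ∧ BiIdempotent f ∧
        ∀ D : Set (Pref (RelSub A P)),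
          RichDomain (RelSub.median (P := P)) D → StrategyProofOn f D) ↔
      ((∀ (R : N → RelSub A P) (a b : A),
          (f R).1 a b ↔ ∃ S : Finset N,
            (Fintype.card N + 2) / 2 ≤ S.card ∧ ∀ i ∈ S, (R i).1 a b) ∧
       (∀ (R : N → RelSub A P) (a b : A),
          (f R).1 a b ↔ ∀ S : Finset N,
            (Fintype.card N + 2) / 2 ≤ S.card → ∃ i ∈ S, (R i).1 a b))) ∧
    ((∀ (R : N → RelSub A P) (a b : A),
        (f R).1 a b ↔ ∃ S : Finset N,
          (Fintype.card N + 2) / 2 ≤ S.card ∧ ∀ i ∈ S, (R i).1 a b) →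
      ∀ R : N → RelSub A P,
        (∀ R' : RelSub A P,
          ∑ i, kemenyDist (f R) (R i) ≤ ∑ i, kemenyDist R' (R i)) ∧
        (∀ R' : RelSub A P,
          (∀ R'' : RelSub A P,
            ∑ i, kemenyDist R' (R i) ≤ ∑ i, kemenyDist R'' (R i)) → R' = f R)) ∧
    ((∀ R : N → RelSub A P,
        (∀ R' : RelSub A P,
          ∑ i, kemenyDist (f R) (R i) ≤ ∑ i, kemenyDist R' (R i)) ∧
        (∀ R' : RelSub A P,
          (∀ R'' : RelSub A P,
            ∑ i, kemenyDist R' (R i) ≤ ∑ i, kemenyDist R'' (R i)) → R' = f R)) →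
      (Anonymous f ∧ BiIdempotent f ∧
        ∀ D : Set (Pref (RelSub A P)),
          RichDomain (RelSub.median (P := P)) D → StrategyProofOn f D)) :=
  relRules_majority_iff_condorcetKemeny_general A P hP hodd f
end

section
/- Let (X,≤) be a finite median join-semilattice with normalized rank function r and covering-graph shortest-path metric δ (which coincides with the rank metric d_r(x,y) = 2r(x∨y) − r(x) − r(y)), and for a profile (x_1,…,x_n) ∈ X^n let m(x_1,…,x_n) = argmin_{x∈X} Σ_{i=1}^n δ(x,x_i) be its metric median set. Then for every n and every profile (x_1,…,x_n), the co-majority outcome f^∂maj(x_N) = ⋀_{S ∈ W^maj} (⋁_{i∈S} x_i), with W^maj = {S ⊆ N : |S| ≥ ⌊(n+2)/2⌋}, belongs to m(x_1,…,x_n); and if n is odd the metric median set is a singleton and f^∂maj(x_N) equals the unique metric median of the profile. -/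
/-
Meet-irreducible elements play the role of the half-spaces of the median semilattice. Upper
distributivity makes each of them prime (a meet lies below `m` only if one of its arguments
does), so the two ends of a covering edge are separated by exactly one meet-irreducible, and
the covering-graph distance of `x` and `y` is the number of meet-irreducibles separating them.
The total distance from `w` to a profile is then a sum, over meet-irreducibles `m`, of the
number of agents on the other side of `m` than `w`. Primality also shows that the co-majority
outcome lies below `m` exactly when a majority of the agents does, so it minimizes every
summand, and strictly so when the number of agents is odd.
-/

open Finset
open scoped symmDiff

section FiniteSemilattice

variable {X : Type*} [SemilatticeSup X] [Finite X]

theorem exists_isGLB_of_mem_lowerBounds {S : Set X} {l : X} (hl : l ∈ lowerBounds S) :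
    ∃ g, IsGLB S g := by
  obtain ⟨g, -, hg⟩ := (lowerBounds S).toFinite.exists_le_maximal hl
  refine ⟨g, hg.prop, fun l' hl' => ?_⟩
  have hsup : g ⊔ l' ∈ lowerBounds S := fun s hs => sup_le (hg.prop hs) (hl' hs)
  exact le_sup_right.trans (hg.le_of_ge hsup le_sup_left)

theorem exists_meetIrred_le_not_le {x y : X} (h : ¬ x ≤ y) :
    ∃ m, MeetIrred m ∧ y ≤ m ∧ ¬ x ≤ m := by
  obtain ⟨m, -, hm⟩ := {z | y ≤ z ∧ ¬ x ≤ z}.toFinite.exists_le_maximal ⟨le_rfl, h⟩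
  refine ⟨m, fun Y hY => ?_, hm.prop⟩
  by_contra hmY
  -- every element of `Y` lies strictly above `m`, hence above `x` by maximality
  refine hm.prop.2 (hY.2 fun z hz => ?_)
  have hmz : m < z := (hY.1 hz).lt_of_ne (by rintro rfl; exact hmY hz)
  by_contra hxz
  exact hm.not_gt ⟨hm.prop.1.trans hmz.le, hxz⟩ hmz

theorem le_of_forall_meetIrred {x y : X} (h : ∀ m, MeetIrred m → y ≤ m → x ≤ m) : x ≤ y := by
  by_contra hxy
  obtain ⟨m, hm, hym, hxm⟩ := exists_meetIrred_le_not_le hxy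
  exact hxm (h m hm hym)

theorem eq_of_forall_meetIrred_iff {x y : X} (h : ∀ m, MeetIrred m → (x ≤ m ↔ y ≤ m)) :
    x = y :=
  le_antisymm (le_of_forall_meetIrred fun m hm => (h m hm).2)
    (le_of_forall_meetIrred fun m hm => (h m hm).1)

end FiniteSemilattice

theorem CovBy.isGLB_pair {X : Type*} [SemilatticeSup X] {a b q : X} (h : a ⋖ b) (haq : a ≤ q)
    (hbq : ¬ b ≤ q) : IsGLB {q, b} a := by
  refine ⟨by simp [haq, h.le], fun l hl => ?_⟩
  have hlq : l ≤ q := hl (by simp)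
  have hlb : l ≤ b := hl (by simp)
  rcases h.eq_or_eq le_sup_right (sup_le hlb h.le) with hla | hlb'
  · exact le_sup_left.trans hla.le
  · exact absurd (hlb' ▸ sup_le hlq haq) hbq

section UpperDistributive

variable {X : Type*} [SemilatticeSup X]

theorem MeetIrred.le_or_le_of_isGLB_pair [Finite X] (hud : UpperDistributive X) {m p q g : X}
    (hm : MeetIrred m) (hg : IsGLB {p, q} g) (hgm : g ≤ m) : p ≤ m ∨ q ≤ m := by
  obtain ⟨g', hg'⟩ := exists_isGLB_of_mem_lowerBounds (S := {m ⊔ p, m ⊔ q}) (l := m) (by simp)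
  have hmg' : m = g' :=
    (sup_eq_left.2 hgm).symm.trans (hud g m p q g g' hgm (hg.1 (by simp)) (hg.1 (by simp)) hg hg')
  subst hmg'
  rcases hm _ hg' with h | h
  · exact Or.inl (le_sup_right.trans_eq h.symm)
  · exact Or.inr (le_sup_right.trans_eq (Set.mem_singleton_iff.1 h).symm)

theorem MeetIrred.exists_le_of_isGLB [Finite X] (hud : UpperDistributive X) {m g : X}
    (hm : MeetIrred m) {S : Set X} (hS : IsGLB S g) (hgm : g ≤ m) : ∃ s ∈ S, s ≤ m := by
  classical
  obtain ⟨T, rfl⟩ := S.toFinite.exists_finset_coe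
  induction T using Finset.induction_on generalizing g with
  | empty =>
    -- `m` would be the top element, i.e. the meet of the empty set
    have hmtop : IsGLB (∅ : Set X) m :=
      isGLB_empty_iff.2 fun z => (isGLB_empty_iff.1 (by simpa using hS) z).trans hgm
    simpa using hm _ hmtop
  | insert a T _ ih =>
    obtain ⟨g', hg'⟩ := exists_isGLB_of_mem_lowerBounds (S := (T : Set X)) (l := g)
      fun s hs => hS.1 (by simp [Finset.mem_coe.1 hs])
    have hpair : IsGLB {a, g'} g := by
      rwa [IsGLB, lowerBounds_insert, lowerBounds_singleton, ← hg'.lowerBounds_eq,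
        ← lowerBounds_insert, ← Finset.coe_insert]
    rcases hm.le_or_le_of_isGLB_pair hud hpair hgm with h | h
    · exact ⟨a, by simp, h⟩
    · obtain ⟨s, hs, hsm⟩ := ih h hg'
      exact ⟨s, by simp [Finset.mem_coe.1 hs], hsm⟩

theorem CovBy.le_of_meetIrred [Finite X] (hud : UpperDistributive X) {a b p q : X} (h : a ⋖ b)
    (hp : MeetIrred p) (hap : a ≤ p) (hbp : ¬ b ≤ p) (haq : a ≤ q) (hbq : ¬ b ≤ q) : q ≤ p :=
  (hp.le_or_le_of_isGLB_pair hud (h.isGLB_pair haq hbq) hap).resolve_right hbp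

end UpperDistributive

section Separators

variable {X : Type*} [SemilatticeSup X] [Fintype X]

open Classical in
noncomputable def separators (x y : X) : Finset X := {m | MeetIrred m ∧ ¬ (x ≤ m ↔ y ≤ m)}

theorem mem_separators {x y m : X} :
    m ∈ separators x y ↔ MeetIrred m ∧ ¬ (x ≤ m ↔ y ≤ m) := by
  simp [separators]

theorem separators_comm (x y : X) : separators x y = separators y x := by
  ext m
  simp only [mem_separators, Iff.comm]

theorem separators_self (x : X) : separators x x = ∅ := by
  ext m
  simp [mem_separators]

theorem separators_symmDiff [DecidableEq X] (x y z : X) :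
    separators x y ∆ separators y z = separators x z := by
  ext m
  simp only [Finset.mem_symmDiff, mem_separators]
  tauto

theorem card_separators_le (x y z : X) :
    #(separators x z) ≤ #(separators x y) + #(separators y z) := by
  classical
  rw [← separators_symmDiff x y z]
  exact (card_le_card symmDiff_le_sup).trans (card_union_le _ _)

theorem card_separators_add_of_subset {x y z : X} (h : separators x y ⊆ separators x z) :
    #(separators x y) + #(separators y z) = #(separators x z) := by
  classical
  rw [← separators_symmDiff y x z, separators_comm y x, symmDiff_of_le h, card_sdiff_of_subset h]
  have := card_le_card h
  omega

theorem eq_of_separators_eq_empty {x y : X} (h : separators x y = ∅) : x = y :=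
  eq_of_forall_meetIrred_iff fun m hm => by
    by_contra hne
    simpa [h] using mem_separators.2 ⟨hm, hne⟩

theorem CovBy.separators_eq_singleton (hud : UpperDistributive X) {a b m : X} (h : a ⋖ b)
    (hm : MeetIrred m) (ham : a ≤ m) (hbm : ¬ b ≤ m) : separators a b = {m} := by
  ext m'
  rw [mem_separators, Finset.mem_singleton]
  constructor
  · rintro ⟨hm', hne⟩
    have ham' : a ≤ m' := by by_contra ha; exact hne (iff_of_false ha fun hb => ha (h.le.trans hb))
    have hbm' : ¬ b ≤ m' := fun hb => hne (iff_of_true ham' hb)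
    exact le_antisymm (h.le_of_meetIrred hud hm ham hbm ham' hbm')
      (h.le_of_meetIrred hud hm' ham' hbm' ham hbm)
  · rintro rfl
    exact ⟨hm, fun hiff => hbm (hiff.1 ham)⟩

theorem card_separators_of_covBy (hud : UpperDistributive X) {a b : X} (h : a ⋖ b) :
    #(separators a b) = 1 := by
  obtain ⟨m, hm, ham, hbm⟩ := exists_meetIrred_le_not_le h.lt.not_ge
  rw [h.separators_eq_singleton hud hm ham hbm, card_singleton]

/-- A first step of a geodesic from `x` to `y`: up towards `x ⊔ y`, or down towards `y` when
`y < x`. -/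
theorem exists_adj_card_separators_succ (hud : UpperDistributive X) {x y : X} (hxy : x ≠ y) :
    ∃ v, (x ⋖ v ∨ v ⋖ x) ∧ #(separators v y) + 1 = #(separators x y) := by
  suffices ∃ v, (x ⋖ v ∨ v ⋖ x) ∧ #(separators x v) = 1 ∧ separators x v ⊆ separators x y by
    obtain ⟨v, hadj, hone, hsub⟩ := this
    exact ⟨v, hadj, by rw [← card_separators_add_of_subset hsub, hone, add_comm]⟩
  by_cases hyx : y ≤ x
  · obtain ⟨v, hyv, hvx⟩ := exists_le_covBy_of_lt (hyx.lt_of_ne hxy.symm)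
    obtain ⟨m, hm, hvm, hxm⟩ := exists_meetIrred_le_not_le hvx.lt.not_ge
    refine ⟨v, Or.inr hvx, ?_⟩
    rw [separators_comm x v, hvx.separators_eq_singleton hud hm hvm hxm]
    refine ⟨card_singleton m, singleton_subset_iff.2 ?_⟩
    exact mem_separators.2 ⟨hm, fun hiff => hxm (hiff.2 (hyv.trans hvm))⟩
  · obtain ⟨v, hxv, hvs⟩ := exists_covBy_le_of_lt (left_lt_sup.2 hyx)
    obtain ⟨m, hm, hxm, hvm⟩ := exists_meetIrred_le_not_le hxv.lt.not_ge
    refine ⟨v, Or.inl hxv, ?_⟩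
    rw [hxv.separators_eq_singleton hud hm hxm hvm]
    refine ⟨card_singleton m, singleton_subset_iff.2 ?_⟩
    exact mem_separators.2 ⟨hm, fun hiff => hvm (hvs.trans (sup_le hxm (hiff.1 hxm)))⟩

theorem card_separators_le_of_walk (hud : UpperDistributive X) {p : ℕ → X} {n : ℕ}
    (hp : ∀ k < n, p k ⋖ p (k + 1) ∨ p (k + 1) ⋖ p k) : #(separators (p 0) (p n)) ≤ n := by
  induction n with
  | zero => simp [separators_self]
  | succ n ih =>
    have hstep : #(separators (p n) (p (n + 1))) = 1 := by
      rcases hp n n.lt_succ_self with h | h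
      · exact card_separators_of_covBy hud h
      · rw [separators_comm]; exact card_separators_of_covBy hud h
    have := card_separators_le (p 0) (p n) (p (n + 1))
    have := ih fun k hk => hp k (hk.trans n.lt_succ_self)
    omega

theorem exists_walk_card_separators (hud : UpperDistributive X) (x y : X) :
    ∃ p : ℕ → X, p 0 = x ∧ p #(separators x y) = y ∧
      ∀ k < #(separators x y), p k ⋖ p (k + 1) ∨ p (k + 1) ⋖ p k := by
  generalize hd : #(separators x y) = d
  induction d generalizing x with
  | zero =>
    exact ⟨fun _ => x, rfl, eq_of_separators_eq_empty (card_eq_zero.1 hd), by simp⟩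
  | succ d ih =>
    obtain ⟨v, hadj, hv⟩ := exists_adj_card_separators_succ hud (x := x) (y := y)
      (by rintro rfl; simp [separators_self] at hd)
    obtain ⟨p, hp0, hpd, hp⟩ := ih v (by omega)
    refine ⟨fun | 0 => x | k + 1 => p k, rfl, hpd, ?_⟩
    rintro (_ | k) hk
    · simpa [hp0, or_comm] using hadj
    · exact hp k (by omega)

theorem covDist_eq_card_separators (hud : UpperDistributive X) (x y : X) :
    covDist x y = #(separators x y) := by
  refine le_antisymm (Nat.sInf_le (exists_walk_card_separators hud x y))
    (le_csInf ⟨_, exists_walk_card_separators hud x y⟩ ?_)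
  rintro n ⟨p, rfl, rfl, hp⟩
  exact card_separators_le_of_walk hud hp

end Separators

section Majority

variable {N : Type*} [Fintype N]

theorem card_filter_not_iff (P : N → Prop) [DecidablePred P] (q : Prop) [Decidable q] :
    #{i | ¬ (q ↔ P i)} = if q then Fintype.card N - #{i | P i} else #{i | P i} := by
  have hcompl : #{i | P i} + #{i | ¬ P i} = Fintype.card N :=
    card_filter_add_card_filter_not P
  split_ifs with hq
  · simp only [hq, true_iff]
    omega
  · simp [hq]

/-- Siding with the majority `p` minimizes the number of disagreeing voters. -/
theorem card_filter_not_iff_le_of_majority (P : N → Prop) [DecidablePred P] {p : Prop}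
    [Decidable p] (hp : p ↔ (Fintype.card N + 2) / 2 ≤ #{i | P i}) (q : Prop) [Decidable q] :
    #{i | ¬ (p ↔ P i)} ≤ #{i | ¬ (q ↔ P i)} := by
  obtain rfl : p = _ := propext hp
  have : #{i | P i} ≤ Fintype.card N := card_le_univ _
  rw [card_filter_not_iff, card_filter_not_iff]
  split_ifs <;> omega

theorem iff_of_card_filter_not_iff_eq_of_majority (hodd : Odd (Fintype.card N))
    (P : N → Prop) [DecidablePred P] {p : Prop} [Decidable p]
    (hp : p ↔ (Fintype.card N + 2) / 2 ≤ #{i | P i}) {q : Prop} [Decidable q]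
    (h : #{i | ¬ (q ↔ P i)} = #{i | ¬ (p ↔ P i)}) : q ↔ p := by
  obtain rfl : p = _ := propext hp
  have : #{i | P i} ≤ Fintype.card N := card_le_univ _
  have := Nat.odd_iff.1 hodd
  rw [card_filter_not_iff, card_filter_not_iff] at h
  split_ifs at h <;> first | tauto | omega

end Majority

section CoMajority

variable {X N : Type*} [SemilatticeSup X] [Fintype N]

open Classical in
theorem coMajority_le_iff [Finite X] (hud : UpperDistributive X) {x : N → X} {c m : X}
    (hc : IsGLB {z | ∃ S : Finset N,
        (Fintype.card N + 2) / 2 ≤ S.card ∧ IsLUB (x '' ↑S) z} c) (hm : MeetIrred m) :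
    c ≤ m ↔ (Fintype.card N + 2) / 2 ≤ #{i | x i ≤ m} := by
  constructor
  · intro hcm
    obtain ⟨z, ⟨S, hS, hSz⟩, hzm⟩ := hm.exists_le_of_isGLB hud hc hcm
    refine hS.trans (card_le_card fun i hi => ?_)
    simpa using (hSz.1 ⟨i, hi, rfl⟩).trans hzm
  · intro hmaj
    set S : Finset N := {i | x i ≤ m}
    have hS : S.Nonempty := card_pos.1 (by omega)
    have hlub := isLUB_sup' (hS.image x)
    rw [coe_image] at hlub
    refine (hc.1 ⟨S, hmaj, hlub⟩).trans (hlub.2 ?_)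
    rintro _ ⟨i, hi, rfl⟩
    simpa [S] using hi

open Classical in
theorem sum_card_separators_eq [Fintype X] (w : X) (x : N → X) :
    ∑ i, #(separators w (x i)) = ∑ m ∈ {m | MeetIrred m}, #{i | ¬ (w ≤ m ↔ x i ≤ m)} := by
  convert sum_card_bipartiteAbove_eq_sum_card_bipartiteBelow
    (fun i m => ¬ (w ≤ m ↔ x i ≤ m)) (s := univ) (t := {m | MeetIrred m}) using 3 <;>
  ext <;> simp [mem_separators, bipartiteAbove, bipartiteBelow]

end CoMajority

theorem coMajority_mem_metricMedian_general
    {X N : Type*} [SemilatticeSup X] [Fintype X] [Fintype N]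
    (hud : UpperDistributive X)
    (x : N → X) (c : X)
    (hc : IsGLB {z | ∃ S : Finset N,
        (Fintype.card N + 2) / 2 ≤ S.card ∧ IsLUB (x '' ↑S) z} c) :
    (∀ w : X, ∑ i, covDist c (x i) ≤ ∑ i, covDist w (x i)) ∧
    (Odd (Fintype.card N) →
      ∀ w : X, (∀ w' : X, ∑ i, covDist w (x i) ≤ ∑ i, covDist w' (x i)) → w = c) := by
  classical
  have hsum (w : X) : ∑ i, covDist w (x i) =
      ∑ m ∈ {m | MeetIrred m}, #{i | ¬ (w ≤ m ↔ x i ≤ m)} := by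
    simp only [covDist_eq_card_separators hud, sum_card_separators_eq]
  have hle (w : X) : ∀ m ∈ ({m | MeetIrred m} : Finset X),
      #{i | ¬ (c ≤ m ↔ x i ≤ m)} ≤ #{i | ¬ (w ≤ m ↔ x i ≤ m)} := fun m hm =>
    card_filter_not_iff_le_of_majority _ (coMajority_le_iff hud hc (by simpa using hm)) _
  refine ⟨fun w => ?_, fun hodd w hw => ?_⟩
  · rw [hsum, hsum]
    exact sum_le_sum (hle w)
  · have heq := (sum_eq_sum_iff_of_le (hle w)).1 <| le_antisymm (sum_le_sum (hle w))
      (by rw [← hsum, ← hsum]; exact hw c)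
    exact eq_of_forall_meetIrred_iff fun m hm =>
      iff_of_card_filter_not_iff_eq_of_majority hodd _ (coMajority_le_iff hud hc hm)
        (heq m (by simpa using hm)).symm

/-- In a finite median join-semilattice, the co-majority outcome `c` of a profile `x`
is a metric median of the profile w.r.t. the covering-graph shortest-path metric; and
when the number of agents is odd it is the unique metric median. -/
theorem coMajority_mem_metricMedian
    {X N : Type*} [SemilatticeSup X] [Fintype X] [Fintype N]
    (hud : UpperDistributive X) (hhelly : MeetHelly X)
    (x : N → X) (c : X)
    (hc : IsGLB {z | ∃ S : Finset N,
        (Fintype.card N + 2) / 2 ≤ S.card ∧ IsLUB (x '' ↑S) z} c) :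
    (∀ w : X, ∑ i, covDist c (x i) ≤ ∑ i, covDist w (x i)) ∧
    (Odd (Fintype.card N) →
      ∀ w : X, (∀ w' : X, ∑ i, covDist w (x i) ≤ ∑ i, covDist w' (x i)) → w = c) :=
  coMajority_mem_metricMedian_general hud x c hc
end
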